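/- The function φ(t) = t·(arctan(t) + arctan((1-t²)/(2t))) is strictly increasing on (0, 1/√3]. -/

import Mathlib

/-!
For `t > 0` the angle `2 arctan t` lies in `(0, π)` and has cotangent `(1 - t²) / (2t)`, so
`φ(t) = t (π/2 - arctan t)`. The right-hand side has derivative
`π/2 - arctan t - t / (1 + t²)`, and `t / (1 + t²) = sin (π - 2 arctan t) / 2` is smaller than
`(π - 2 arctan t) / 2` because `sin y < y` for `y > 0`. Hence `φ` is strictly increasing on all of
`(0, ∞)`.
-/

open Real

namespace Real

theorem arctan_one_sub_sq_div_two_mul {t : ℝ} (ht : 0 < t) :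
    arctan ((1 - t ^ 2) / (2 * t)) = π / 2 - 2 * arctan t := by
  have h_pos : 0 < arctan t := by simpa using arctan_strictMono ht
  have h_tan : tan (π / 2 - 2 * arctan t) = (1 - t ^ 2) / (2 * t) := by
    rw [tan_pi_div_two_sub, tan_two_mul, tan_arctan, inv_div]
  rw [← h_tan, arctan_tan] <;> linarith [arctan_lt_pi_div_two t]

theorem sin_two_mul_arctan (x : ℝ) : sin (2 * arctan x) = 2 * x / (1 + x ^ 2) := by
  have h_sqrt : √(1 + x ^ 2) ^ 2 = 1 + x ^ 2 := sq_sqrt (by positivity)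
  rw [sin_two_mul, sin_arctan, cos_arctan, mul_assoc, div_mul_div_comm, mul_one, ← sq, h_sqrt,
    mul_div_assoc]

theorem div_one_add_sq_lt_pi_div_two_sub_arctan (x : ℝ) :
    x / (1 + x ^ 2) < π / 2 - arctan x := by
  have h_sin : sin (π - 2 * arctan x) < π - 2 * arctan x :=
    sin_lt (by linarith [arctan_lt_pi_div_two x])
  rw [sin_pi_sub, sin_two_mul_arctan] at h_sin
  linarith [mul_div_assoc 2 x (1 + x ^ 2)]

theorem hasDerivAt_mul_pi_div_two_sub_arctan (x : ℝ) :
    HasDerivAt (fun t => t * (π / 2 - arctan t)) (π / 2 - arctan x - x / (1 + x ^ 2)) x :=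
  ((hasDerivAt_id' x).mul ((hasDerivAt_arctan x).const_sub (π / 2))).congr_deriv (by ring)

theorem strictMono_mul_pi_div_two_sub_arctan : StrictMono fun t => t * (π / 2 - arctan t) :=
  strictMono_of_deriv_pos fun x => by
    rw [(hasDerivAt_mul_pi_div_two_sub_arctan x).deriv]
    linarith [div_one_add_sq_lt_pi_div_two_sub_arctan x]

end Real

theorem stmt_2 :
    StrictMonoOn (fun t : ℝ => t * (Real.arctan t + Real.arctan ((1 - t ^ 2) / (2 * t))))
      (Set.Ioc 0 (1 / Real.sqrt 3)) := by
  have h_eq : Set.EqOn (fun t : ℝ => t * (arctan t + arctan ((1 - t ^ 2) / (2 * t))))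
      (fun t => t * (π / 2 - arctan t)) (Set.Ioi 0) := fun t ht => by
    simp only [arctan_one_sub_sq_div_two_mul ht]
    ring
  exact ((strictMono_mul_pi_div_two_sub_arctan.strictMonoOn _).congr h_eq.symm).mono
    Set.Ioc_subset_Ioi_self
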